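/- arXiv:2512.16179 — 3 statements merged into one kernel-verified Lean document; each statement's English description precedes it below -/
import Mathlib

section
/- Let 0 < α < 1, let t₀ ∈ ℝ, and let V : [t₀, ∞) → ℝ be continuously differentiable. Then for every t > t₀, the Caputo fractional derivative of |V| is bounded by the sign of V(t) times the Caputo fractional derivative of V; that is, (1/Γ(1−α)) ∫_{t₀}^{t} (t−s)^{−α} · sign(V(s))·V′(s) ds ≤ sign(V(t)) · (1/Γ(1−α)) ∫_{t₀}^{t} (t−s)^{−α} V′(s) ds, where sign(V(s))·V′(s) is the almost-everywhere derivative of the locally Lipschitz function s ↦ |V(s)| and sign denotes the real sign function. -/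
open Set MeasureTheory intervalIntegral Filter Topology

lemma rsign_abs_le (y : ℝ) : |Real.sign y| ≤ 1 := by
  rcases Real.sign_apply_eq y with h | h | h <;> rw [h] <;> norm_num

lemma rsign_mul_le_abs (y x : ℝ) : Real.sign y * x ≤ |x| := by
  calc Real.sign y * x ≤ |Real.sign y * x| := le_abs_self _
    _ = |Real.sign y| * |x| := abs_mul _ _
    _ ≤ 1 * |x| := mul_le_mul_of_nonneg_right (rsign_abs_le y) (abs_nonneg x)
    _ = |x| := one_mul _

lemma rsign_mul_abs_le (y x : ℝ) : |Real.sign y * x| ≤ |x| := by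
  rw [abs_mul]
  calc |Real.sign y| * |x| ≤ 1 * |x| := mul_le_mul_of_nonneg_right (rsign_abs_le y) (abs_nonneg x)
    _ = |x| := one_mul _

lemma rsign_mul_self (x : ℝ) : Real.sign x * x = |x| := by
  rcases lt_trichotomy x 0 with h | h | h
  · rw [Real.sign_of_neg h, abs_of_neg h]; ring
  · simp [h]
  · rw [Real.sign_of_pos h, abs_of_pos h]; ring

lemma rsign_measurable : Measurable Real.sign := by
  have : (Real.sign : ℝ → ℝ) = fun r => if r < 0 then (-1:ℝ) else if 0 < r then 1 else 0 := by
    funext r; rfl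
  rw [this]
  exact Measurable.ite measurableSet_Iio measurable_const
    (Measurable.ite measurableSet_Ioi measurable_const measurable_const)

lemma hasDerivAt_abs_of_ne {f : ℝ → ℝ} {c r : ℝ} (h : HasDerivAt f c r) (hr : f r ≠ 0) :
    HasDerivAt (fun x => |f x|) (Real.sign (f r) * c) r := by
  rcases hr.lt_or_gt with hneg | hpos
  · have hev : (fun x => |f x|) =ᶠ[nhds r] fun x => -f x := by
      filter_upwards [h.continuousAt.preimage_mem_nhds (Iio_mem_nhds hneg)] with x hx
      exact abs_of_neg hx
    have := h.neg.congr_of_eventuallyEq hev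
    rw [Real.sign_of_neg hneg]
    simpa using this
  · have hev : (fun x => |f x|) =ᶠ[nhds r] fun x => f x := by
      filter_upwards [h.continuousAt.preimage_mem_nhds (Ioi_mem_nhds hpos)] with x hx
      exact abs_of_pos hx
    have := h.congr_of_eventuallyEq hev
    rw [Real.sign_of_pos hpos]
    simpa using this

lemma hasDerivAt_abs_zero {f : ℝ → ℝ} {r : ℝ} (h : HasDerivAt f 0 r) :
    HasDerivAt (fun x => |f x|) 0 r := by
  rw [hasDerivAt_iff_tendsto] at h ⊢
  refine squeeze_zero (fun x => by positivity) (fun x => ?_) h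
  simp only [smul_zero, sub_zero, Real.norm_eq_abs]
  exact mul_le_mul_of_nonneg_left (abs_abs_sub_abs_le_abs_sub _ _) (by positivity)

lemma countable_isolated_zeros (f : ℝ → ℝ) (S : Set ℝ)
    (h : ∀ b ∈ S, f b = 0 ∧ ∃ c, c ≠ 0 ∧ HasDerivAt f c b) : S.Countable := by
  have key : ∀ b ∈ S, ∃ u, b < u ∧ ∀ x ∈ Ioo b u, f x ≠ 0 := by
    intro b hb
    obtain ⟨hfb, c, hc, hd⟩ := h b hb
    have hslope : Tendsto (slope f b) (𝓝[≠] b) (𝓝 c) := hasDerivAt_iff_tendsto_slope.mp hd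
    have hev : ∀ᶠ x in 𝓝[≠] b, slope f b x ≠ 0 := hslope.eventually_ne hc
    have hev2 : ∀ᶠ x in 𝓝[>] b, f x ≠ 0 := by
      have hle : 𝓝[>] b ≤ 𝓝[≠] b := nhdsWithin_mono b (fun x hx => ne_of_gt hx)
      filter_upwards [hle hev, self_mem_nhdsWithin] with x hx hx2 hfx
      apply hx
      rw [slope_def_field, hfx, hfb]
      simp
    obtain ⟨u, hu, hsub⟩ := mem_nhdsGT_iff_exists_Ioo_subset.mp hev2
    exact ⟨u, hu, fun x hx => hsub hx⟩
  choose! y hy1 hy2 using key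
  refine Set.PairwiseDisjoint.countable_of_Ioo ?_ hy1
  intro b hb b' hb' hne
  rw [Function.onFun, Set.disjoint_left]
  intro z hz hz'
  rcases hne.lt_or_gt with hlt | hlt
  · exact hy2 b hb b' ⟨hlt, lt_trans hz'.1 hz.2⟩ (h b' hb').1
  · exact hy2 b' hb' b ⟨hlt, lt_trans hz.1 hz'.2⟩ (h b hb).1

/-- Let `0 < α < 1`, `t₀ ∈ ℝ`, and `V : [t₀, ∞) → ℝ` continuously differentiable. Then for
every `t > t₀`, the Caputo fractional derivative of `|V|` (whose a.e. derivative is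
`sign(V(s))·V′(s)`) is bounded by `sign(V(t))` times the Caputo fractional derivative of `V`:
`(1/Γ(1−α)) ∫_{t₀}^{t} (t−s)^{−α} sign(V(s)) V′(s) ds
  ≤ sign(V(t)) · (1/Γ(1−α)) ∫_{t₀}^{t} (t−s)^{−α} V′(s) ds`. -/
theorem caputo_abs_le_sign_mul_caputo
    {α t₀ : ℝ} (hα0 : 0 < α) (hα1 : α < 1)
    (V : ℝ → ℝ) (hV : ContDiffOn ℝ 1 V (Set.Ici t₀)) :
    ∀ t > t₀,
      (1 / Real.Gamma (1 - α)) * ∫ s in t₀..t, (t - s) ^ (-α) * (Real.sign (V s) * deriv V s) ≤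
        Real.sign (V t) *
          ((1 / Real.Gamma (1 - α)) * ∫ s in t₀..t, (t - s) ^ (-α) * deriv V s) := by
  intro t ht
  have hΓ : 0 < Real.Gamma (1 - α) := Real.Gamma_pos_of_pos (by linarith)
  -- derivative setup
  have hdV : ∀ s ∈ Ioi t₀, HasDerivAt V (derivWithin V (Ici t₀) s) s := fun s hs =>
    (((hV.differentiableOn one_ne_zero) s (mem_Ici.2 (le_of_lt hs))).hasDerivWithinAt).hasDerivAt (Ici_mem_nhds hs)
  have hderiv_eq : ∀ s ∈ Ioi t₀, deriv V s = derivWithin V (Ici t₀) s := fun s hs =>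
    (hdV s hs).deriv
  have hdV' : ∀ s ∈ Ioi t₀, HasDerivAt V (deriv V s) s := fun s hs =>
    (hderiv_eq s hs) ▸ hdV s hs
  have hWc : ContinuousOn (derivWithin V (Ici t₀)) (Ici t₀) :=
    hV.continuousOn_derivWithin (uniqueDiffOn_Ici t₀) le_rfl
  have hdc : ContinuousOn (deriv V) (Ioi t₀) :=
    (hWc.mono Ioi_subset_Ici_self).congr hderiv_eq
  -- bound for the derivative
  obtain ⟨M, hM⟩ : ∃ M, ∀ s ∈ Icc t₀ t, |derivWithin V (Ici t₀) s| ≤ M := by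
    simpa [Real.norm_eq_abs] using
      isCompact_Icc.exists_bound_of_continuousOn (hWc.mono Icc_subset_Ici_self)
  have hM0 : 0 ≤ M := le_trans (abs_nonneg _) (hM t₀ ⟨le_rfl, ht.le⟩)
  have hMd : ∀ s ∈ Ioc t₀ t, |deriv V s| ≤ M := fun s hs => by
    rw [hderiv_eq s hs.1]; exact hM s ⟨hs.1.le, hs.2⟩
  -- kernel integrability
  have hK_int : IntervalIntegrable (fun s => (t - s) ^ (-α)) volume t₀ t := by
    have h1 : IntervalIntegrable (fun x : ℝ => x ^ (-α)) volume (t - t₀) (t - t) :=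
      intervalIntegrable_rpow' (by linarith)
    simpa using h1.comp_sub_left t
  have hK_IntOn : IntegrableOn (fun s => (t - s) ^ (-α)) (Ioc t₀ t) :=
    (intervalIntegrable_iff_integrableOn_Ioc_of_le ht.le).mp hK_int
  -- general product integrability
  have hVmeas : AEMeasurable V (volume.restrict (Ioc t₀ t)) :=
    (hV.continuousOn.mono (fun x hx => le_of_lt hx.1)).aemeasurable measurableSet_Ioc
  have prod_int : ∀ (φ : ℝ → ℝ) (C : ℝ), AEStronglyMeasurable φ (volume.restrict (Ioc t₀ t)) →
      (∀ s ∈ Ioc t₀ t, |φ s| ≤ C) →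
      IntervalIntegrable (fun s => (t - s) ^ (-α) * φ s) volume t₀ t := by
    intro φ C hmeas hbound
    rw [intervalIntegrable_iff_integrableOn_Ioc_of_le ht.le]
    have hb : ∀ᵐ x ∂volume.restrict (Ioc t₀ t), ‖φ x‖ ≤ C :=
      (ae_restrict_iff' measurableSet_Ioc).2 (ae_of_all _ fun s hs => by
        rw [Real.norm_eq_abs]; exact hbound s hs)
    have := Integrable.bdd_mul hK_IntOn hmeas hb
    simpa [mul_comm, IntegrableOn] using this
  -- measurability of integrands
  have hmeas1 : AEStronglyMeasurable (fun s => Real.sign (V s) * deriv V s)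
      (volume.restrict (Ioc t₀ t)) :=
    ((rsign_measurable.comp_aemeasurable hVmeas).mul
      (measurable_deriv V).aemeasurable).aestronglyMeasurable
  have hmeas2 : AEStronglyMeasurable (fun s => Real.sign (V t) * deriv V s)
      (volume.restrict (Ioc t₀ t)) :=
    (aemeasurable_const.mul (measurable_deriv V).aemeasurable).aestronglyMeasurable
  have hbound1 : ∀ s ∈ Ioc t₀ t, |Real.sign (V s) * deriv V s| ≤ M := fun s hs =>
    le_trans (rsign_mul_abs_le _ _) (hMd s hs)
  have hbound2 : ∀ s ∈ Ioc t₀ t, |Real.sign (V t) * deriv V s| ≤ M := fun s hs =>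
    le_trans (rsign_mul_abs_le _ _) (hMd s hs)
  have int1 : IntervalIntegrable (fun s => (t - s) ^ (-α) * (Real.sign (V s) * deriv V s))
      volume t₀ t := prod_int _ M hmeas1 hbound1
  have int2 : IntervalIntegrable (fun s => (t - s) ^ (-α) * (Real.sign (V t) * deriv V s))
      volume t₀ t := prod_int _ M hmeas2 hbound2
  -- the difference integrand
  set g₀ : ℝ → ℝ := fun s => Real.sign (V t) * deriv V s - Real.sign (V s) * deriv V s with hg₀
  have hmeasg₀ : AEStronglyMeasurable g₀ (volume.restrict (Ioc t₀ t)) := hmeas2.sub hmeas1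
  have hboundg₀ : ∀ s ∈ Ioc t₀ t, |g₀ s| ≤ 2 * M := fun s hs => by
    have := hbound1 s hs; have := hbound2 s hs
    rw [hg₀]
    calc |Real.sign (V t) * deriv V s - Real.sign (V s) * deriv V s|
        ≤ |Real.sign (V t) * deriv V s| + |Real.sign (V s) * deriv V s| := abs_sub _ _
      _ ≤ 2 * M := by linarith
  have intg₀ : IntervalIntegrable (fun s => (t - s) ^ (-α) * g₀ s) volume t₀ t :=
    prod_int _ (2 * M) hmeasg₀ hboundg₀
  -- main nonnegativity
  have hmain : 0 ≤ ∫ s in t₀..t, (t - s) ^ (-α) * g₀ s := by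
    set G : ℝ → ℝ := fun r => |V r| - Real.sign (V t) * V r with hG
    have hGnonneg : ∀ r, 0 ≤ G r := fun r => sub_nonneg.2 (rsign_mul_le_abs _ _)
    have hGcont : ContinuousOn G (Ici t₀) :=
      (hV.continuousOn.abs).sub (continuousOn_const.mul hV.continuousOn)
    set B : Set ℝ := {s | V s = 0 ∧ deriv V s ≠ 0} ∩ Ioo t₀ t with hB
    have hBc : B.Countable := countable_isolated_zeros V B
      (fun b hb => ⟨hb.1.1, deriv V b, hb.1.2, hdV' b hb.2.1⟩)
    have hGderiv : ∀ s ∈ Ioo t₀ t \ B,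
        HasDerivAt G (Real.sign (V s) * deriv V s - Real.sign (V t) * deriv V s) s := by
      intro s hs
      obtain ⟨hs1, hs2⟩ := hs
      have hds : HasDerivAt V (deriv V s) s := hdV' s hs1.1
      have habs : HasDerivAt (fun x => |V x|) (Real.sign (V s) * deriv V s) s := by
        by_cases hVs : V s = 0
        · have hd0 : deriv V s = 0 := by
            by_contra hne
            exact hs2 ⟨⟨hVs, hne⟩, hs1⟩
          rw [hVs, hd0, Real.sign_zero, mul_zero]
          exact hasDerivAt_abs_zero (by rwa [hd0] at hds)
        · exact hasDerivAt_abs_of_ne hds hVs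
      have hlin : HasDerivAt (fun x => Real.sign (V t) * V x) (Real.sign (V t) * deriv V s) s :=
        hds.const_mul _
      rw [hG]
      exact habs.sub hlin
    have hKd : ∀ s ∈ Iio t, HasDerivAt (fun x => (t - x) ^ (-α)) (α * (t - s) ^ (-α - 1)) s := by
      intro s hs
      have h1 : HasDerivAt (fun x : ℝ => t - x) (-1) s := (hasDerivAt_id s).const_sub t
      have h2 : HasDerivAt (fun y : ℝ => y ^ (-α)) (-α * (t - s) ^ (-α - 1)) (t - s) :=
        Real.hasDerivAt_rpow_const (x := t - s) (p := -α) (Or.inl (ne_of_gt (sub_pos.2 hs)))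
      have h3 : HasDerivAt (fun x : ℝ => (t - x) ^ (-α)) ((-α * (t - s) ^ (-α - 1)) * (-1)) s :=
        h2.comp s h1
      convert h3 using 1
      ring
    have hFTC : ∀ τ ∈ Ioo t₀ t,
        -(2 * M * (t - τ) ^ (1 - α)) ≤ ∫ s in t₀..τ, (t - s) ^ (-α) * g₀ s := by
      intro τ hτ
      have hτt : τ < t := hτ.2
      have ht₀τ : t₀ < τ := hτ.1
      have husub : uIcc t₀ τ ⊆ uIcc t₀ t := by
        rw [uIcc_of_le ht₀τ.le, uIcc_of_le ht.le]
        exact Icc_subset_Icc le_rfl hτt.le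
      have hKg₀τ : IntervalIntegrable (fun s => (t - s) ^ (-α) * g₀ s) volume t₀ τ :=
        intg₀.mono_set husub
      have hbase : ∀ x ∈ Icc t₀ τ, t - x ≠ 0 := fun x hx =>
        ne_of_gt (sub_pos.2 (lt_of_le_of_lt hx.2 hτt))
      have hKcont : ContinuousOn (fun s => (t - s) ^ (-α)) (Icc t₀ τ) :=
        ((continuous_const.sub continuous_id).continuousOn).rpow_const
          (fun x hx => Or.inl (hbase x hx))
      have hK'Gcont : ContinuousOn (fun s => α * (t - s) ^ (-α - 1) * G s) (Icc t₀ τ) :=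
        (continuousOn_const.mul (((continuous_const.sub continuous_id).continuousOn).rpow_const
          (fun x hx => Or.inl (hbase x hx)))).mul (hGcont.mono Icc_subset_Ici_self)
      have hK'G_int : IntervalIntegrable (fun s => α * (t - s) ^ (-α - 1) * G s) volume t₀ τ := by
        rw [intervalIntegrable_iff_integrableOn_Ioc_of_le ht₀τ.le]
        exact (hK'Gcont.integrableOn_compact isCompact_Icc).mono_set Ioc_subset_Icc_self
      have hF'int : IntervalIntegrable
          (fun s => α * (t - s) ^ (-α - 1) * G s - (t - s) ^ (-α) * g₀ s) volume t₀ τ :=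
        hK'G_int.sub hKg₀τ
      have hFcont : ContinuousOn (fun s => (t - s) ^ (-α) * G s) (Icc t₀ τ) :=
        hKcont.mul (hGcont.mono Icc_subset_Ici_self)
      have hFd : ∀ s ∈ Ioo t₀ τ \ B,
          HasDerivAt (fun s => (t - s) ^ (-α) * G s)
            (α * (t - s) ^ (-α - 1) * G s - (t - s) ^ (-α) * g₀ s) s := by
        intro s hs
        have h1 := hKd s (lt_trans hs.1.2 hτt)
        have h2 := hGderiv s ⟨⟨hs.1.1, lt_trans hs.1.2 hτt⟩, hs.2⟩
        have h3 : HasDerivAt (fun s => (t - s) ^ (-α) * G s) _ s := h1.mul h2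
        convert h3 using 1
        rw [hg₀]
        ring
      have heq := integral_eq_of_hasDerivAt_off_countable_of_le
        (fun s => (t - s) ^ (-α) * G s)
        (fun s => α * (t - s) ^ (-α - 1) * G s - (t - s) ^ (-α) * g₀ s)
        ht₀τ.le hBc hFcont hFd hF'int
      beta_reduce at heq
      have hsplit2 : ∫ s in t₀..τ, (α * (t - s) ^ (-α - 1) * G s - (t - s) ^ (-α) * g₀ s) =
          (∫ s in t₀..τ, α * (t - s) ^ (-α - 1) * G s) -
            ∫ s in t₀..τ, (t - s) ^ (-α) * g₀ s :=
        intervalIntegral.integral_sub hK'G_int hKg₀τ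
      have hpos1 : 0 ≤ ∫ s in t₀..τ, α * (t - s) ^ (-α - 1) * G s :=
        intervalIntegral.integral_nonneg ht₀τ.le (fun s hs =>
          mul_nonneg (mul_nonneg hα0.le (Real.rpow_nonneg
            (sub_nonneg.2 (le_of_lt (lt_of_le_of_lt hs.2 hτt))) _)) (hGnonneg s))
      have hFt₀ : 0 ≤ (t - t₀) ^ (-α) * G t₀ :=
        mul_nonneg (Real.rpow_nonneg (by linarith) _) (hGnonneg t₀)
      have hVdiff : |V t - V τ| ≤ M * (t - τ) := by
        have hsub : Icc τ t ⊆ Ioi t₀ := fun x hx => lt_of_lt_of_le ht₀τ hx.1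
        have hftc : ∫ s in τ..t, deriv V s = V t - V τ := by
          apply intervalIntegral.integral_eq_sub_of_hasDerivAt
          · intro s hs
            rw [uIcc_of_le hτt.le] at hs
            exact hdV' s (hsub hs)
          · rw [intervalIntegrable_iff_integrableOn_Ioc_of_le hτt.le]
            exact ((hdc.mono hsub).integrableOn_compact isCompact_Icc).mono_set
              Ioc_subset_Icc_self
        have hnorm := intervalIntegral.norm_integral_le_of_norm_le_const (C := M)
          (f := deriv V) (a := τ) (b := t) (fun x hx => by
            rw [uIoc_of_le hτt.le] at hx
            rw [Real.norm_eq_abs]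
            exact hMd x ⟨lt_trans ht₀τ hx.1, hx.2⟩)
        rw [hftc, Real.norm_eq_abs] at hnorm
        calc |V t - V τ| ≤ M * |t - τ| := hnorm
          _ = M * (t - τ) := by rw [abs_of_nonneg (by linarith)]
      have hGτ : G τ ≤ 2 * M * (t - τ) := by
        have h1 : |V τ| - |V t| ≤ |V τ - V t| := abs_sub_abs_le_abs_sub _ _
        have h2 : Real.sign (V t) * (V t - V τ) ≤ |V t - V τ| := rsign_mul_le_abs _ _
        have h3 : G τ = (|V τ| - |V t|) + Real.sign (V t) * (V t - V τ) := by
          rw [hG]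
          beta_reduce
          linear_combination -rsign_mul_self (V t)
        have h4 : |V τ - V t| = |V t - V τ| := abs_sub_comm _ _
        linarith
      have hKτ : (t - τ) ^ (-α) * G τ ≤ 2 * M * (t - τ) ^ (1 - α) := by
        have hpos : (0:ℝ) < t - τ := sub_pos.2 hτt
        calc (t - τ) ^ (-α) * G τ ≤ (t - τ) ^ (-α) * (2 * M * (t - τ)) :=
              mul_le_mul_of_nonneg_left hGτ (Real.rpow_nonneg hpos.le _)
          _ = 2 * M * ((t - τ) ^ (-α) * (t - τ) ^ (1:ℝ)) := by rw [Real.rpow_one]; ring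
          _ = 2 * M * (t - τ) ^ (1 - α) := by
              rw [← Real.rpow_add hpos]
              ring_nf
      linarith [heq, hsplit2, hpos1, hFt₀, hKτ]
    have hIntOnIcc : IntegrableOn (fun s => (t - s) ^ (-α) * g₀ s) (uIcc t₀ t) := by
      rw [uIcc_of_le ht.le, integrableOn_Icc_iff_integrableOn_Ioc]
      exact (intervalIntegrable_iff_integrableOn_Ioc_of_le ht.le).mp intg₀
    have hcont_prim : ContinuousOn (fun τ => ∫ s in t₀..τ, (t - s) ^ (-α) * g₀ s) (uIcc t₀ t) :=
      intervalIntegral.continuousOn_primitive_interval hIntOnIcc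
    have htmem : t ∈ uIcc t₀ t := by rw [uIcc_of_le ht.le]; exact ⟨ht.le, le_rfl⟩
    have hne : (𝓝[Ioo t₀ t] t).NeBot := by
      rw [← mem_closure_iff_nhdsWithin_neBot, closure_Ioo (ne_of_lt ht)]
      exact ⟨ht.le, le_rfl⟩
    have htendsto1 : Tendsto (fun τ => ∫ s in t₀..τ, (t - s) ^ (-α) * g₀ s) (𝓝[Ioo t₀ t] t)
        (𝓝 (∫ s in t₀..t, (t - s) ^ (-α) * g₀ s)) :=
      ((hcont_prim t htmem).mono (by rw [uIcc_of_le ht.le]; exact Ioo_subset_Icc_self)).tendsto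
    have htendsto2 : Tendsto (fun τ => -(2 * M * (t - τ) ^ (1 - α))) (𝓝[Ioo t₀ t] t) (𝓝 0) := by
      have h1 : Tendsto (fun τ : ℝ => t - τ) (𝓝 t) (𝓝 0) := by
        have h0 : Tendsto (fun τ : ℝ => t - τ) (𝓝 t) (𝓝 (t - t)) :=
          ((continuous_const (y := t)).sub continuous_id).tendsto t
        simpa using h0
      have h2 : ContinuousAt (fun x : ℝ => x ^ (1 - α)) 0 :=
        Real.continuousAt_rpow_const 0 _ (Or.inr (by linarith))
      have h3 : Tendsto (fun τ : ℝ => (t - τ) ^ (1 - α)) (𝓝 t) (𝓝 ((0:ℝ) ^ (1 - α))) :=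
        h2.tendsto.comp h1
      rw [Real.zero_rpow (by linarith : 1 - α ≠ 0)] at h3
      have h4 := (h3.const_mul (2 * M)).neg
      simp only [mul_zero, neg_zero] at h4
      exact h4.mono_left nhdsWithin_le_nhds
    exact le_of_tendsto_of_tendsto htendsto2 htendsto1
      (eventually_mem_nhdsWithin.mono (fun τ hτ => hFTC τ hτ))
  -- assemble
  have hsplit : ∫ s in t₀..t, (t - s) ^ (-α) * g₀ s =
      (∫ s in t₀..t, (t - s) ^ (-α) * (Real.sign (V t) * deriv V s)) -
        ∫ s in t₀..t, (t - s) ^ (-α) * (Real.sign (V s) * deriv V s) := by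
    rw [← intervalIntegral.integral_sub int2 int1]
    congr 1; funext s; rw [hg₀]; ring
  have hpull : Real.sign (V t) * ∫ s in t₀..t, (t - s) ^ (-α) * deriv V s =
      ∫ s in t₀..t, (t - s) ^ (-α) * (Real.sign (V t) * deriv V s) := by
    rw [← intervalIntegral.integral_const_mul]
    congr 1; funext s; ring
  have h : (∫ s in t₀..t, (t - s) ^ (-α) * (Real.sign (V s) * deriv V s)) ≤
      Real.sign (V t) * ∫ s in t₀..t, (t - s) ^ (-α) * deriv V s := by
    rw [hpull]; linarith [hsplit ▸ hmain]
  have h2 := mul_le_mul_of_nonneg_left h (le_of_lt (one_div_pos.2 hΓ))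
  calc (1 / Real.Gamma (1 - α)) * ∫ s in t₀..t, (t - s) ^ (-α) * (Real.sign (V s) * deriv V s)
      ≤ (1 / Real.Gamma (1 - α)) *
        (Real.sign (V t) * ∫ s in t₀..t, (t - s) ^ (-α) * deriv V s) := h2
    _ = Real.sign (V t) *
        ((1 / Real.Gamma (1 - α)) * ∫ s in t₀..t, (t - s) ^ (-α) * deriv V s) := by ring
end

section
/- For every α with 0 < α < 1 and every real x ≥ 0, the one-parameter Mittag–Leffler function satisfies the upper bound E_α(−x) ≤ 1 / (1 + x/Γ(1+α)). -/
open Finset Filter Topology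

/-- One-parameter Mittag–Leffler function (real argument):
`E_α(x) = ∑_{k=0}^∞ x^k / Γ(kα + 1)`. -/
noncomputable def mittagLeffler (α x : ℝ) : ℝ :=
  ∑' k : ℕ, x ^ k / Real.Gamma (k * α + 1)

namespace MLBound

/-- `bb β j = ∏_{i<j} (β+i+1)/(i+1)`, the generalized binomial coefficient `C(β+j, j)`. -/
noncomputable def bb (β : ℝ) (j : ℕ) : ℝ := ∏ i ∈ Finset.range j, ((β + i + 1) / (i + 1))

@[simp] lemma bb_zero (β : ℝ) : bb β 0 = 1 := by simp [bb]

lemma bb_succ (β : ℝ) (j : ℕ) : bb β (j+1) = bb β j * ((β + j + 1) / (j + 1)) := by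
  unfold bb; rw [Finset.prod_range_succ]

lemma bb_succ_mul (β : ℝ) (j : ℕ) : ((j:ℝ) + 1) * bb β (j+1) = (β + j + 1) * bb β j := by
  rw [bb_succ]
  have : ((j:ℝ) + 1) ≠ 0 := by positivity
  field_simp

@[simp] lemma bb_zero_left (j : ℕ) : bb 0 j = 1 := by
  refine Finset.prod_eq_one fun i _ => ?_
  rw [zero_add, div_self (by positivity)]

lemma bb_pos {β : ℝ} (hβ : -1 < β) (j : ℕ) : 0 < bb β j := by
  refine Finset.prod_pos fun i _ => div_pos ?_ (by positivity)
  have : (0:ℝ) ≤ i := Nat.cast_nonneg i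
  linarith

lemma bb_nonneg {β : ℝ} (hβ : -1 < β) (j : ℕ) : 0 ≤ bb β j := (bb_pos hβ j).le

lemma one_le_bb {β : ℝ} (hβ : 0 ≤ β) (j : ℕ) : 1 ≤ bb β j := by
  unfold bb
  have h1 : (1:ℝ) = ∏ _i ∈ Finset.range j, (1:ℝ) := by simp
  rw [h1]
  refine Finset.prod_le_prod (fun i _ => zero_le_one) (fun i _ => ?_)
  rw [le_div_iff₀ (by positivity)]
  have : (0:ℝ) ≤ i := Nat.cast_nonneg i
  linarith

lemma bb_mono {β : ℝ} (hβ : 0 ≤ β) : Monotone (bb β) := by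
  refine monotone_nat_of_le_succ fun j => ?_
  rw [bb_succ]
  have h1 : (0:ℝ) < (j:ℝ) + 1 := by positivity
  have h2 : 1 ≤ (β + j + 1) / (j + 1) := by
    rw [le_div_iff₀ h1]; linarith
  nlinarith [bb_nonneg (by linarith : (-1:ℝ) < β) j]

lemma bb_le_pow {β c : ℝ} (hβ : -1 < β) (hc : β ≤ c) (hc0 : 0 ≤ c) (j : ℕ) :
    bb β j ≤ (c + 1) ^ j := by
  have hfac : ∀ i ∈ Finset.range j, (β + i + 1) / (i + 1) ≤ c + 1 := by
    intro i _
    rw [div_le_iff₀ (by positivity)]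
    have h0 : (0:ℝ) ≤ i := Nat.cast_nonneg i
    nlinarith [mul_nonneg hc0 h0]
  calc bb β j ≤ ∏ _i ∈ Finset.range j, (c+1) := by
        refine Finset.prod_le_prod (fun i _ => ?_) hfac
        have : (0:ℝ) ≤ i := Nat.cast_nonneg i
        apply div_nonneg (by linarith) (by positivity)
    _ = (c+1)^j := by simp

section Alpha

variable (α : ℝ)

/-- Coefficients of `(1-ζ)^α`: `gg 0 = 1`, `gg (i+1) = -α·bb(-α) i/(i+1)`. -/
noncomputable def gg : ℕ → ℝ
  | 0 => 1
  | (i+1) => -(α * bb (-α) i / (i+1))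

@[simp] lemma gg_zero : gg α 0 = 1 := rfl

lemma gg_succ (i : ℕ) : gg α (i+1) = -(α * bb (-α) i / (i+1)) := rfl

lemma gg_rec (i : ℕ) : ((i:ℝ) + 1) * gg α (i+1) = ((i:ℝ) - α) * gg α i := by
  cases i with
  | zero => simp [gg]
  | succ i =>
    have h1 : ((i:ℝ) + 1) ≠ 0 := by positivity
    have h2 : ((i:ℝ) + 1 + 1) ≠ 0 := by positivity
    simp only [gg_succ, bb_succ]
    push_cast
    field_simp
    ring

variable {α}

lemma conv_eq (β : ℝ) : ∀ j : ℕ, ∑ i ∈ Finset.range (j+1), gg α i * bb β (j - i) = bb (β - α) j := by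
  intro j
  induction j with
  | zero => simp
  | succ j ih =>
    have hj1 : ((j:ℝ) + 1) ≠ 0 := by positivity
    have hstep : ((j:ℝ)+1) * (∑ i ∈ Finset.range (j+2), gg α i * bb β (j+1-i))
        = ((j:ℝ)+1+β-α) * (∑ i ∈ Finset.range (j+1), gg α i * bb β (j-i)) := by
      have hsplit : ∀ i ∈ Finset.range (j+2),
          ((j:ℝ)+1) * (gg α i * bb β (j+1-i))
          = (i:ℝ) * gg α i * bb β (j+1-i) + ((j+1-i : ℕ):ℝ) * (gg α i * bb β (j+1-i)) := by
        intro i hi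
        have hi' : i ≤ j + 1 := by
          have := Finset.mem_range.mp hi; omega
        have hcast : ((j+1-i : ℕ):ℝ) = (j:ℝ) + 1 - i := by
          push_cast [Nat.cast_sub hi']; ring
        rw [hcast]; ring
      rw [Finset.mul_sum, Finset.sum_congr rfl hsplit, Finset.sum_add_distrib]
      have hA : ∑ i ∈ Finset.range (j+2), (i:ℝ) * gg α i * bb β (j+1-i)
          = ∑ i ∈ Finset.range (j+1), ((i:ℝ) - α) * gg α i * bb β (j-i) := by
        rw [Finset.sum_range_succ']
        simp only [Nat.cast_zero, zero_mul]
        rw [add_zero]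
        refine Finset.sum_congr rfl fun i hi => ?_
        have hsub : j + 1 - (i+1) = j - i := by omega
        rw [hsub]
        have hg := gg_rec α i
        push_cast
        calc ((i:ℝ)+1) * gg α (i+1) * bb β (j-i) = (((i:ℝ)+1) * gg α (i+1)) * bb β (j-i) := by ring
          _ = (((i:ℝ) - α) * gg α i) * bb β (j-i) := by rw [hg]
          _ = ((i:ℝ) - α) * gg α i * bb β (j-i) := by ring
      have hC : ∑ i ∈ Finset.range (j+2), ((j+1-i : ℕ):ℝ) * (gg α i * bb β (j+1-i))
          = ∑ i ∈ Finset.range (j+1), gg α i * ((β + ((j-i:ℕ):ℝ) + 1) * bb β (j-i)) := by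
        rw [Finset.sum_range_succ]
        simp only [Nat.sub_self, Nat.cast_zero, zero_mul, add_zero]
        refine Finset.sum_congr rfl fun i hi => ?_
        have hi' : i ≤ j := by have := Finset.mem_range.mp hi; omega
        have hsub : j + 1 - i = (j - i) + 1 := by omega
        have hcast : ((j+1-i : ℕ):ℝ) = ((j-i:ℕ):ℝ) + 1 := by
          rw [hsub]; push_cast; ring
        rw [hsub]
        push_cast
        calc (((j-i:ℕ):ℝ) + 1) * (gg α i * bb β ((j-i)+1))
            = gg α i * ((((j-i:ℕ):ℝ) + 1) * bb β ((j-i)+1)) := by ring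
          _ = gg α i * ((β + ((j-i:ℕ):ℝ) + 1) * bb β (j-i)) := by rw [bb_succ_mul]
      rw [hA, hC, ← Finset.sum_add_distrib, Finset.mul_sum]
      refine Finset.sum_congr rfl fun i hi => ?_
      have hi' : i ≤ j := by have := Finset.mem_range.mp hi; omega
      have hcast : ((j-i : ℕ):ℝ) = (j:ℝ) - i := by
        push_cast [Nat.cast_sub hi']; ring
      rw [hcast]; ring
    have hSj : ∑ i ∈ Finset.range (j+2), gg α i * bb β (j+1-i)
        = ((j:ℝ)+1+β-α) * bb (β - α) j / ((j:ℝ)+1) := by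
      rw [eq_div_iff hj1, ← ih]
      linarith [hstep]
    rw [hSj, bb_succ]
    field_simp
    ring

end Alpha


section U

variable {α : ℝ}

/-- The discrete approximation `u_j(y) = ∑_m (-y)^m C(αm+j, j)`. -/
noncomputable def uSeq (α y : ℝ) (j : ℕ) : ℝ := ∑' m : ℕ, (-y)^m * bb (α * m) j

lemma summable_bb_aux {y : ℝ} (hy0 : 0 < y) (hy1 : y < 1) (j : ℕ) (s : ℕ → ℝ)
    (hs1 : ∀ m, -1 < s m) (hs2 : ∀ m, s m ≤ m) :
    Summable (fun m => (-y)^m * bb (s m) j) := by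
  have hyne : y ≠ 0 := ne_of_gt hy0
  have hbase : Summable (fun m : ℕ => ((m:ℝ))^j * y^m) :=
    summable_pow_mul_geometric_of_norm_lt_one j
      (by rwa [Real.norm_eq_abs, abs_of_pos hy0])
  have h2 : Summable (fun m : ℕ => (((m+1:ℕ)):ℝ)^j * y^(m+1)) :=
    (summable_nat_add_iff 1).mpr hbase
  have h3 : Summable (fun m : ℕ => ((m:ℝ)+1)^j * y^m) := by
    refine (h2.mul_left (y⁻¹)).congr fun m => ?_
    push_cast
    field_simp
    ring
  refine Summable.of_norm_bounded h3 fun m => ?_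
  rw [Real.norm_eq_abs, abs_mul, abs_pow, abs_neg, abs_of_pos hy0,
    abs_of_nonneg (bb_nonneg (hs1 m) j)]
  rw [mul_comm]
  refine mul_le_mul_of_nonneg_right ?_ (by positivity)
  exact bb_le_pow (hs1 m) (hs2 m) (Nat.cast_nonneg m) j

lemma summable_main (hα0 : 0 < α) (hα1 : α < 1) {y : ℝ} (hy0 : 0 < y) (hy1 : y < 1) (j : ℕ) :
    Summable (fun m : ℕ => (-y)^m * bb (α * m) j) := by
  refine summable_bb_aux hy0 hy1 j _ (fun m => ?_) (fun m => ?_)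
  · have : (0:ℝ) ≤ α * m := by positivity
    linarith
  · have h0 : (0:ℝ) ≤ m := Nat.cast_nonneg m
    nlinarith

lemma summable_shifted (hα0 : 0 < α) (hα1 : α < 1) {y : ℝ} (hy0 : 0 < y) (hy1 : y < 1) (j : ℕ) :
    Summable (fun m : ℕ => (-y)^m * bb (α * m - α) j) := by
  refine summable_bb_aux hy0 hy1 j _ (fun m => ?_) (fun m => ?_)
  · have : (0:ℝ) ≤ α * m := by positivity
    linarith
  · have h0 : (0:ℝ) ≤ m := Nat.cast_nonneg m
    nlinarith

lemma u_rec (hα0 : 0 < α) (hα1 : α < 1) {y : ℝ} (hy0 : 0 < y) (hy1 : y < 1) (j : ℕ) :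
    (∑ i ∈ Finset.range (j+1), gg α i * uSeq α y (j - i)) + y * uSeq α y j = bb (-α) j := by
  have hsum1 : ∀ k, Summable (fun m : ℕ => (-y)^m * bb (α * m) k) :=
    fun k => summable_main hα0 hα1 hy0 hy1 k
  have hsumF : Summable (fun m : ℕ => (-y)^m * bb (α * m - α) j) :=
    summable_shifted hα0 hα1 hy0 hy1 j
  have hfin : ∑ i ∈ Finset.range (j+1), gg α i * uSeq α y (j-i)
      = ∑' m : ℕ, (-y)^m * bb (α * m - α) j := by
    have e1 : ∀ i ∈ Finset.range (j+1), gg α i * uSeq α y (j-i)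
        = ∑' m : ℕ, gg α i * ((-y)^m * bb (α * m) (j - i)) := by
      intro i _
      exact (tsum_mul_left).symm
    rw [Finset.sum_congr rfl e1,
      ← Summable.tsum_finsetSum (fun i _ => (hsum1 (j - i)).mul_left _)]
    refine tsum_congr fun m => ?_
    have e2 : ∑ i ∈ Finset.range (j+1), gg α i * ((-y)^m * bb (α * m) (j-i))
        = (-y)^m * ∑ i ∈ Finset.range (j+1), gg α i * bb (α * m) (j-i) := by
      rw [Finset.mul_sum]
      exact Finset.sum_congr rfl fun i _ => by ring
    rw [e2, conv_eq]
  have hshift : y * uSeq α y j = bb (-α) j - ∑' m : ℕ, (-y)^m * bb (α * m - α) j := by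
    have h0 := Summable.tsum_eq_zero_add hsumF
    have hFs : ∀ m : ℕ, (-y)^(m+1) * bb (α * ((m+1:ℕ):ℝ) - α) j
        = -(y * ((-y)^m * bb (α * m) j)) := by
      intro m
      have hc : α * ((m+1:ℕ):ℝ) - α = α * m := by push_cast; ring
      rw [hc]; ring
    have h1 : ∑' m : ℕ, (-y)^(m+1) * bb (α * ((m+1:ℕ):ℝ) - α) j
        = -(y * uSeq α y j) := by
      rw [tsum_congr hFs, tsum_neg]
      have hml : ∑' (b:ℕ), y * ((-y)^b * bb (α * b) j) = y * uSeq α y j := tsum_mul_left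
      rw [hml]
    have h2 : ((-y)^(0:ℕ) * bb (α * ((0:ℕ):ℝ) - α) j) = bb (-α) j := by
      norm_num
    rw [h1, h2] at h0 <;> try skip
    linarith [h0]
  rw [hfin]
  linarith [hshift]

lemma u_solved (hα0 : 0 < α) (hα1 : α < 1) {y : ℝ} (hy0 : 0 < y) (hy1 : y < 1) (j : ℕ) :
    uSeq α y j = (bb (-α) j
      + ∑ i ∈ Finset.range j, (α * bb (-α) i / (i+1)) * uSeq α y (j-1-i)) / (1+y) := by
  have h := u_rec hα0 hα1 hy0 hy1 j
  rw [Finset.sum_range_succ'] at h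
  simp only [gg_succ, gg_zero, one_mul, Nat.sub_zero] at h
  have hidx : ∀ i ∈ Finset.range j,
      -(α * bb (-α) i / (i+1)) * uSeq α y (j-(i+1))
      = -((α * bb (-α) i / (i+1)) * uSeq α y (j-1-i)) := by
    intro i hi
    have : j - (i+1) = j-1-i := by omega
    rw [this]; ring
  rw [Finset.sum_congr rfl hidx, Finset.sum_neg_distrib] at h
  have h1y : (1:ℝ) + y ≠ 0 := by positivity
  rw [eq_div_iff h1y]
  linarith [h]

lemma idV0 (hα0 : 0 < α) (hα1 : α < 1) (j : ℕ) :
    ∑ i ∈ Finset.range j, α * bb (-α) i / (i+1) = 1 - bb (-α) j := by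
  have h := conv_eq (α := α) (β := 0) j
  rw [zero_sub] at h
  simp only [bb_zero_left, mul_one] at h
  rw [Finset.sum_range_succ'] at h
  simp only [gg_succ, gg_zero] at h
  rw [Finset.sum_neg_distrib] at h
  linarith [h]

lemma idV1 (hα0 : 0 < α) (hα1 : α < 1) (j : ℕ) :
    ∑ i ∈ Finset.range j, (α * bb (-α) i / (i+1)) * bb α (j-1-i) = bb α j - 1 := by
  have h := conv_eq (α := α) (β := α) j
  rw [sub_self, bb_zero_left] at h
  rw [Finset.sum_range_succ'] at h
  simp only [gg_succ, gg_zero, one_mul, Nat.sub_zero] at h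
  have hidx : ∀ i ∈ Finset.range j,
      -(α * bb (-α) i / (i+1)) * bb α (j-(i+1))
      = -((α * bb (-α) i / (i+1)) * bb α (j-1-i)) := by
    intro i hi
    have : j - (i+1) = j-1-i := by omega
    rw [this]; ring
  rw [Finset.sum_congr rfl hidx, Finset.sum_neg_distrib] at h
  linarith [h]

lemma inv_le_aux {A B : ℝ} (hA : 1 ≤ A) (hAB : A ≤ B) :
    A⁻¹ ≤ B⁻¹ + (B - A) * B⁻¹ := by
  have hA0 : 0 < A := by linarith
  have hB0 : 0 < B := by linarith
  have hkey : B ≤ A * (1 + B - A) := by nlinarith [mul_nonneg (sub_nonneg.2 hAB) (sub_nonneg.2 hA)]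
  have h2 : B⁻¹ + (B-A) * B⁻¹ = (1 + B - A)/B := by
    field_simp; ring
  rw [h2, le_div_iff₀ hB0]
  rw [inv_mul_le_iff₀ hA0]
  linarith [hkey]


theorem u_le_v (hα0 : 0 < α) (hα1 : α < 1) {y : ℝ} (hy0 : 0 < y) (hy1 : y < 1) :
    ∀ j, uSeq α y j ≤ (1 + y * bb α j)⁻¹ := by
  have hm1 : (-1:ℝ) < α := by linarith
  have hm2 : (-1:ℝ) < -α := by linarith
  have hbpos : ∀ k, 0 < bb α k := fun k => bb_pos hm1 k
  have hvpos : ∀ k, 0 < 1 + y * bb α k := fun k => by nlinarith [hbpos k]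
  intro j
  induction j using Nat.strong_induction_on with
  | _ j IH =>
    rw [u_solved hα0 hα1 hy0 hy1 j]
    rw [div_le_iff₀ (by positivity : (0:ℝ) < 1 + y)]
    have hmm : ∀ i : ℕ, 0 ≤ α * bb (-α) i / (i+1) := fun i =>
      div_nonneg (mul_nonneg hα0.le (bb_nonneg hm2 i)) (by positivity)
    have hSle : ∑ i ∈ Finset.range j, (α * bb (-α) i/(i+1)) * uSeq α y (j-1-i)
        ≤ ∑ i ∈ Finset.range j, (α * bb (-α) i/(i+1))
            * ((1 + y * bb α j)⁻¹ + y*(bb α j - bb α (j-1-i)) * (1 + y * bb α j)⁻¹) := by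
      refine Finset.sum_le_sum fun i hi => ?_
      have hij : i < j := Finset.mem_range.mp hi
      refine mul_le_mul_of_nonneg_left ?_ (hmm i)
      have hIH : uSeq α y (j-1-i) ≤ (1 + y * bb α (j-1-i))⁻¹ := IH _ (by omega)
      refine hIH.trans ?_
      have h1A : 1 ≤ 1 + y * bb α (j-1-i) := by nlinarith [(hbpos (j-1-i)).le]
      have hAB : 1 + y * bb α (j-1-i) ≤ 1 + y * bb α j := by
        have := bb_mono hα0.le (show j-1-i ≤ j by omega)
        nlinarith
      have haux := inv_le_aux h1A hAB
      have hBA : (1 + y * bb α j) - (1 + y * bb α (j-1-i))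
          = y * (bb α j - bb α (j-1-i)) := by ring
      rw [hBA] at haux
      exact haux
    refine le_trans (add_le_add_right hSle (bb (-α) j)) ?_
    have hexp : ∑ i ∈ Finset.range j, (α * bb (-α) i/(i+1))
          * ((1 + y * bb α j)⁻¹ + y*(bb α j - bb α (j-1-i)) * (1 + y * bb α j)⁻¹)
        = (1 - bb (-α) j) * (1 + y * bb α j)⁻¹
          + y * (1 + y * bb α j)⁻¹ * ((1 - bb (-α) j) * bb α j - (bb α j - 1)) := by
      have e1 : ∀ i ∈ Finset.range j, (α * bb (-α) i/(i+1))
          * ((1 + y * bb α j)⁻¹ + y*(bb α j - bb α (j-1-i)) * (1 + y * bb α j)⁻¹)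
          = (α * bb (-α) i/(i+1)) * ((1 + y * bb α j) * (1 + y * bb α j)⁻¹)
            - y * (1 + y * bb α j)⁻¹ * ((α * bb (-α) i/(i+1)) * bb α (j-1-i)) := by
        intro i _; ring
      rw [Finset.sum_congr rfl e1, Finset.sum_sub_distrib, ← Finset.sum_mul, ← Finset.mul_sum,
        idV0 hα0 hα1 j, idV1 hα0 hα1 j]
      ring
    rw [hexp]
    apply le_of_eq
    have hvone : (1 + y * bb α j)⁻¹ * (1 + y * bb α j) = 1 := inv_mul_cancel₀ (hvpos j).ne'
    linear_combination (-(bb (-α) j)) * hvone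

/-- The main discrete inequality. -/
theorem u_mul_le_one (hα0 : 0 < α) (hα1 : α < 1) {y : ℝ} (hy0 : 0 < y) (hy1 : y < 1) (j : ℕ) :
    uSeq α y j * (1 + y * bb α j) ≤ 1 := by
  have hm1 : (-1:ℝ) < α := by linarith
  have hvpos : 0 < 1 + y * bb α j := by nlinarith [bb_pos hm1 j]
  have h := u_le_v hα0 hα1 hy0 hy1 j
  calc uSeq α y j * (1 + y * bb α j) ≤ (1 + y * bb α j)⁻¹ * (1 + y * bb α j) :=
        mul_le_mul_of_nonneg_right h hvpos.le
    _ = 1 := inv_mul_cancel₀ hvpos.ne'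


lemma bb_eq_prod {s : ℝ} (hs : s ≠ 0) : ∀ n : ℕ,
    bb s n = (∏ j ∈ Finset.range (n+1), (s + j)) / (s * (Nat.factorial n : ℝ)) := by
  intro n
  induction n with
  | zero => simp [div_self hs]
  | succ n ih =>
    rw [bb_succ, ih]
    have hp : ∏ j ∈ Finset.range (n+1+1), (s + (j:ℝ))
        = (∏ j ∈ Finset.range (n+1), (s + (j:ℝ))) * (s + ((n+1:ℕ):ℝ)) :=
      Finset.prod_range_succ _ _
    rw [hp, Nat.factorial_succ]
    have h1 : ((n:ℝ)+1) ≠ 0 := by positivity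
    have h2 : ((Nat.factorial n : ℕ) : ℝ) ≠ 0 := by exact_mod_cast (Nat.factorial_pos n).ne'
    push_cast
    field_simp
    ring

lemma term_eq {t : ℝ} (ht : 0 < t) {s : ℝ} (hs : 0 < s) {n : ℕ} (hn : 0 < n) :
    (t/n) ^ s * bb s n = t ^ s / (s * Real.GammaSeq s n) := by
  have hn0 : (0:ℝ) < n := by exact_mod_cast hn
  have hdiv : (t/n) ^ s = t ^ s / (n:ℝ) ^ s := Real.div_rpow ht.le hn0.le s
  have hprodpos : (0:ℝ) < ∏ j ∈ Finset.range (n+1), (s + j) := by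
    refine Finset.prod_pos fun j _ => ?_
    have : (0:ℝ) ≤ j := Nat.cast_nonneg j
    linarith
  have hns : (0:ℝ) < (n:ℝ) ^ s := Real.rpow_pos_of_pos hn0 s
  have hfact : (0:ℝ) < ((Nat.factorial n : ℕ) : ℝ) := by exact_mod_cast Nat.factorial_pos n
  rw [hdiv, bb_eq_prod hs.ne', Real.GammaSeq]
  field_simp

lemma log_diff_ge {c : ℝ} (hc : 0 < c) : 1/(c+1) ≤ Real.log (c+1) - Real.log c := by
  have h1 : 0 < c / (c+1) := by positivity
  have h2 := Real.log_le_sub_one_of_pos h1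
  rw [Real.log_div hc.ne' (by positivity)] at h2
  have h3 : c / (c+1) - 1 = -(1/(c+1)) := by field_simp; ring
  rw [h3] at h2
  linarith

lemma sum_inv_le_log {s : ℝ} (hs : 0 < s) (n : ℕ) :
    ∑ i ∈ Finset.range n, 1/(s + i + 1) ≤ Real.log (s + n) - Real.log s := by
  have htel : ∑ i ∈ Finset.range n, (Real.log (s + i + 1) - Real.log (s + i))
      = Real.log (s + n) - Real.log s := by
    induction n with
    | zero => simp
    | succ n ih =>
      rw [Finset.sum_range_succ, ih]
      push_cast
      ring
  rw [← htel]
  refine Finset.sum_le_sum fun i _ => ?_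
  have hci : (0:ℝ) < s + i := by
    have : (0:ℝ) ≤ i := Nat.cast_nonneg i
    linarith
  have := log_diff_ge hci
  have harr : s + i + 1 = (s + i) + 1 := by ring
  rw [harr]
  linarith [this]

lemma bb_ratio_le {α : ℝ} (hα0 : 0 < α) {s : ℝ} (hs : 0 < s) (n : ℕ) :
    bb (s + α) n ≤ ((s + n)/s) ^ α * bb s n := by
  have hsplit : bb (s + α) n
      = bb s n * ∏ i ∈ Finset.range n, ((s + α + i + 1)/(s + i + 1)) := by
    unfold bb
    rw [← Finset.prod_mul_distrib]
    refine Finset.prod_congr rfl fun i _ => ?_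
    have h1 : (0:ℝ) < s + i + 1 := by
      have : (0:ℝ) ≤ i := Nat.cast_nonneg i
      linarith
    have h2 : ((i:ℝ)+1) ≠ 0 := by positivity
    field_simp
  have hratio : ∏ i ∈ Finset.range n, ((s + α + i + 1)/(s + i + 1))
      ≤ ((s + n)/s) ^ α := by
    have hle : ∀ i ∈ Finset.range n, (s + α + i + 1)/(s + i + 1)
        ≤ Real.exp (α / (s + i + 1)) := by
      intro i _
      have h1 : (0:ℝ) < s + i + 1 := by
        have : (0:ℝ) ≤ i := Nat.cast_nonneg i
        linarith
      have h2 := Real.add_one_le_exp (α / (s + i + 1))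
      rw [div_le_iff₀ h1]
      have h3 : (α / (s + i + 1) + 1) * (s + i + 1) = α + (s + i + 1) := by
        field_simp
      nlinarith [h2, h1]
    calc ∏ i ∈ Finset.range n, ((s + α + i + 1)/(s + i + 1))
        ≤ ∏ i ∈ Finset.range n, Real.exp (α / (s + i + 1)) := by
          refine Finset.prod_le_prod (fun i _ => ?_) hle
          have : (0:ℝ) ≤ i := Nat.cast_nonneg i
          have h1 : (0:ℝ) < s + i + 1 := by linarith
          positivity
      _ = Real.exp (∑ i ∈ Finset.range n, α / (s + i + 1)) := (Real.exp_sum _ _).symm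
      _ ≤ Real.exp (α * (Real.log (s + n) - Real.log s)) := by
          apply Real.exp_le_exp.mpr
          have hsum := sum_inv_le_log hs n
          have : ∑ i ∈ Finset.range n, α / (s + i + 1)
              = α * ∑ i ∈ Finset.range n, 1/(s + i + 1) := by
            rw [Finset.mul_sum]
            exact Finset.sum_congr rfl fun i _ => by ring
          rw [this]
          nlinarith [hsum]
      _ = ((s + n)/s) ^ α := by
          have hpos : (0:ℝ) < (s + n)/s := by
            have : (0:ℝ) ≤ n := Nat.cast_nonneg n
            positivity
          rw [Real.rpow_def_of_pos hpos, Real.log_div (by positivity) hs.ne']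
          ring_nf
  have hbbpos : 0 ≤ bb s n := bb_nonneg (by linarith) n
  calc bb (s + α) n = bb s n * ∏ i ∈ Finset.range n, ((s + α + i + 1)/(s + i + 1)) := hsplit
    _ ≤ bb s n * (((s + n)/s) ^ α) := mul_le_mul_of_nonneg_left hratio hbbpos
    _ = ((s + n)/s) ^ α * bb s n := by ring


lemma tendsto_tsum_aux (f : ℕ → ℕ → ℝ) (g : ℕ → ℝ) (D : ℕ → ℝ) (M₀ : ℕ) (hD : Summable D)
    (hlim : ∀ m, Tendsto (fun n => f n m) atTop (𝓝 (g m)))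
    (hdom : ∀ᶠ n in atTop, ∀ k, |f n (k + M₀)| ≤ D k)
    (hsum : ∀ᶠ n in atTop, Summable (fun m => f n m)) :
    Tendsto (fun n => ∑' m, f n m) atTop (𝓝 (∑' m, g m)) := by
  have hgband : ∀ k, |g (k + M₀)| ≤ D k := by
    intro k
    have h1 : Tendsto (fun n => |f n (k + M₀)|) atTop (𝓝 |g (k + M₀)|) := (hlim _).abs
    refine le_of_tendsto h1 ?_
    filter_upwards [hdom] with n hn using hn k
  have hgs : Summable g := by
    have h1 : Summable (fun k => g (k + M₀)) := by
      refine Summable.of_norm_bounded hD fun k => ?_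
      simpa [Real.norm_eq_abs] using hgband k
    exact (summable_nat_add_iff M₀).mp h1
  rw [Metric.tendsto_nhds]
  intro ε hε
  have hTD : Tendsto (fun M => ∑' k, D (k + M)) atTop (𝓝 0) := tendsto_sum_nat_add D
  have hM : ∃ M : ℕ, ∑' k, D (k + M) < ε/4 := by
    have := (hTD.eventually_lt_const (by linarith : (0:ℝ) < ε/4)).exists
    exact this
  obtain ⟨M, hM⟩ := hM
  set R := M + M₀ with hR
  have hDnn : ∀ k, 0 ≤ D k := by
    obtain ⟨n, hn⟩ := hdom.exists
    exact fun k => le_trans (abs_nonneg _) (hn k)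
  have hfin : ∀ᶠ n in atTop, ∀ m ∈ Finset.range R, |f n m - g m| < ε/(4*(R+1)) := by
    rw [Filter.eventually_all_finset]
    intro m _
    have h1 : Tendsto (fun n => |f n m - g m|) atTop (𝓝 |g m - g m|) :=
      ((hlim m).sub tendsto_const_nhds).abs
    simp only [sub_self, abs_zero] at h1
    exact h1.eventually_lt_const (by positivity)
  filter_upwards [hdom, hsum, hfin] with n hd hs hf
  have hsabs : Summable (fun m => |f n m|) := hs.abs
  have hsplit_f : ∑' m, f n m = (∑ m ∈ Finset.range R, f n m) + ∑' k, f n (k + R) :=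
    (Summable.sum_add_tsum_nat_add R hs).symm
  have hsplit_g : ∑' m, g m = (∑ m ∈ Finset.range R, g m) + ∑' k, g (k + R) :=
    (Summable.sum_add_tsum_nat_add R hgs).symm
  have hshift_sum : Summable (fun k => f n (k + R)) := (summable_nat_add_iff R).mpr hs
  have hshift_sumg : Summable (fun k => g (k + R)) := (summable_nat_add_iff R).mpr hgs
  have hDshift : Summable (fun k => D (k + M)) := (summable_nat_add_iff M).mpr hD
  have hb2 : |∑' k, f n (k + R)| ≤ ∑' k, D (k + M) := by
    have h1 : |∑' k, f n (k + R)| ≤ ∑' k, |f n (k + R)| := by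
      simpa [Real.norm_eq_abs] using norm_tsum_le_tsum_norm (f := fun k => f n (k + R))
        (by simpa [Real.norm_eq_abs] using hshift_sum.abs)
    refine h1.trans (Summable.tsum_le_tsum (fun k => ?_) hshift_sum.abs hDshift)
    have : k + R = (k + M) + M₀ := by omega
    rw [this]
    exact hd (k + M)
  have hb3 : |∑' k, g (k + R)| ≤ ∑' k, D (k + M) := by
    have h1 : |∑' k, g (k + R)| ≤ ∑' k, |g (k + R)| := by
      simpa [Real.norm_eq_abs] using norm_tsum_le_tsum_norm (f := fun k => g (k + R))
        (by simpa [Real.norm_eq_abs] using hshift_sumg.abs)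
    refine h1.trans (Summable.tsum_le_tsum (fun k => ?_) hshift_sumg.abs hDshift)
    have : k + R = (k + M) + M₀ := by omega
    rw [this]
    exact hgband (k + M)
  have hb1 : |∑ m ∈ Finset.range R, f n m - ∑ m ∈ Finset.range R, g m| ≤ (R:ℝ) * (ε/(4*(R+1))) := by
    rw [← Finset.sum_sub_distrib]
    refine (Finset.abs_sum_le_sum_abs _ _).trans ?_
    calc ∑ m ∈ Finset.range R, |f n m - g m| ≤ ∑ _m ∈ Finset.range R, ε/(4*(R+1)) := by
          refine Finset.sum_le_sum fun m hm => (hf m hm).le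
      _ = (R:ℝ) * (ε/(4*(R+1))) := by
          rw [Finset.sum_const, Finset.card_range]
          simp [nsmul_eq_mul]
  have hRR : (R:ℝ) * (ε/(4*(R+1))) < ε/4 := by
    have h1 : (R:ℝ) < (R:ℝ)+1 := by linarith
    calc (R:ℝ) * (ε/(4*(R+1))) < ((R:ℝ)+1) * (ε/(4*(R+1))) := by
          exact mul_lt_mul_of_pos_right h1 (by positivity)
      _ = ε/4 := by
          have h2 : ((R:ℝ)+1) ≠ 0 := by positivity
          field_simp
  rw [Real.dist_eq, hsplit_f, hsplit_g]
  have : |(∑ m ∈ Finset.range R, f n m + ∑' k, f n (k + R))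
      - (∑ m ∈ Finset.range R, g m + ∑' k, g (k + R))|
      ≤ |∑ m ∈ Finset.range R, f n m - ∑ m ∈ Finset.range R, g m|
        + |∑' k, f n (k + R)| + |∑' k, g (k + R)| := by
    have habs := abs_add_le (∑ m ∈ Finset.range R, f n m - ∑ m ∈ Finset.range R, g m)
      (∑' k, f n (k + R) - ∑' k, g (k + R))
    have habs2 := abs_sub (∑' k, f n (k + R)) (∑' k, g (k + R))
    have harr : (∑ m ∈ Finset.range R, f n m + ∑' k, f n (k + R))
        - (∑ m ∈ Finset.range R, g m + ∑' k, g (k + R))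
        = (∑ m ∈ Finset.range R, f n m - ∑ m ∈ Finset.range R, g m)
          + (∑' k, f n (k + R) - ∑' k, g (k + R)) := by ring
    rw [harr]
    calc _ ≤ _ := habs
      _ ≤ _ := by
          have := abs_sub_abs_le_abs_sub (∑' k, f n (k+R)) (∑' k, g (k+R))
          have h2 : |∑' k, f n (k + R) - ∑' k, g (k + R)|
              ≤ |∑' k, f n (k + R)| + |∑' k, g (k + R)| := abs_sub _ _
          linarith
  calc |(∑ m ∈ Finset.range R, f n m + ∑' k, f n (k + R))
      - (∑ m ∈ Finset.range R, g m + ∑' k, g (k + R))| ≤ _ := this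
    _ < ε := by linarith [hb1, hb2, hb3, hRR, hM]


lemma abs_term {y : ℝ} (hy : 0 ≤ y) {β : ℝ} (hβ : -1 < β) (n m : ℕ) :
    |(-y)^m * bb β n| = y^m * bb β n := by
  rw [abs_mul, abs_pow, abs_neg, abs_of_nonneg hy, abs_of_nonneg (bb_nonneg hβ n)]

lemma ratio_step {α : ℝ} (hα0 : 0 < α) {t : ℝ} (ht : 0 < t) {n m : ℕ}
    (hn : (4:ℝ)*t ≤ n) (hn1 : 1 ≤ n) (hm : (4:ℝ)*t ≤ α*m) :
    ((t/n)^α)^(m+1) * bb (α*((m+1:ℕ):ℝ)) n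
      ≤ (1/2:ℝ)^α * (((t/n)^α)^m * bb (α*(m:ℝ)) n) := by
  have hs : 0 < α*(m:ℝ) := lt_of_lt_of_le (by positivity) hm
  have hnR : (0:ℝ) < n := by exact_mod_cast hn1
  have hy0 : (0:ℝ) ≤ (t/n)^α := Real.rpow_nonneg (by positivity) α
  have hcast : α*((m+1:ℕ):ℝ) = α*(m:ℝ) + α := by push_cast; ring
  rw [hcast, pow_succ]
  have hbr := bb_ratio_le hα0 hs n
  have hbbnn : (0:ℝ) ≤ bb (α*(m:ℝ)) n := bb_nonneg (by linarith) n
  have hkey : (t/n)^α * ((α*(m:ℝ) + n)/(α*(m:ℝ)))^α ≤ (1/2:ℝ)^α := by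
    rw [← Real.mul_rpow (by positivity) (by positivity)]
    refine Real.rpow_le_rpow (by positivity) ?_ hα0.le
    have harr : t/(n:ℝ) * ((α*(m:ℝ) + n)/(α*(m:ℝ))) = t/n + t/(α*(m:ℝ)) := by
      have hm' : (m:ℝ) ≠ 0 := by rintro h; rw [h, mul_zero] at hs; exact lt_irrefl _ hs
      field_simp
    rw [harr]
    have h1 : t/(n:ℝ) ≤ 1/4 := by
      rw [div_le_div_iff₀ hnR (by norm_num)]
      linarith
    have h2 : t/(α*(m:ℝ)) ≤ 1/4 := by
      rw [div_le_div_iff₀ hs (by norm_num)]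
      linarith
    linarith
  calc ((t/n)^α)^m * (t/n)^α * bb (α*(m:ℝ) + α) n
      = ((t/n)^α)^m * ((t/n)^α * bb (α*(m:ℝ) + α) n) := by ring
    _ ≤ ((t/n)^α)^m * ((t/n)^α * (((α*(m:ℝ) + n)/(α*(m:ℝ)))^α * bb (α*(m:ℝ)) n)) := by
        refine mul_le_mul_of_nonneg_left ?_ (pow_nonneg hy0 m)
        exact mul_le_mul_of_nonneg_left hbr hy0
    _ = (((t/n)^α) * ((α*(m:ℝ) + n)/(α*(m:ℝ)))^α) * (((t/n)^α)^m * bb (α*(m:ℝ)) n) := by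
        ring
    _ ≤ (1/2:ℝ)^α * (((t/n)^α)^m * bb (α*(m:ℝ)) n) := by
        refine mul_le_mul_of_nonneg_right hkey ?_
        exact mul_nonneg (pow_nonneg hy0 m) hbbnn

lemma term_tendsto {α : ℝ} (hα0 : 0 < α) {t : ℝ} (ht : 0 < t) (m : ℕ) (hm : 0 < m) :
    Tendsto (fun n : ℕ => ((t/n)^α)^m * bb (α*(m:ℝ)) n) atTop
      (𝓝 (t ^ (α*(m:ℝ)) / Real.Gamma (α*(m:ℝ)+1))) := by
  have hmR : (0:ℝ) < m := by exact_mod_cast hm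
  have hs : 0 < α * (m:ℝ) := by positivity
  have hΓ : Real.Gamma (α*(m:ℝ)) ≠ 0 := (Real.Gamma_pos_of_pos hs).ne'
  have hlim : Tendsto (fun n : ℕ => t ^ (α*(m:ℝ)) / (α*(m:ℝ) * Real.GammaSeq (α*(m:ℝ)) n)) atTop
      (𝓝 (t ^ (α*(m:ℝ)) / (α*(m:ℝ) * Real.Gamma (α*(m:ℝ))))) := by
    exact Tendsto.div tendsto_const_nhds
      (tendsto_const_nhds.mul (Real.GammaSeq_tendsto_Gamma _)) (mul_ne_zero hs.ne' hΓ)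
  have heq : Real.Gamma (α*(m:ℝ)+1) = (α*(m:ℝ)) * Real.Gamma (α*(m:ℝ)) :=
    Real.Gamma_add_one hs.ne'
  rw [heq]
  refine hlim.congr' ?_
  filter_upwards [eventually_ge_atTop 1] with n hn
  have hn0 : 0 < n := hn
  have hnR : (0:ℝ) < n := by exact_mod_cast hn0
  have hdivpos : 0 < t/(n:ℝ) := by positivity
  have h1 : ((t/(n:ℝ))^α)^m = (t/(n:ℝ))^(α*(m:ℝ)) := by
    rw [← Real.rpow_natCast ((t/(n:ℝ))^α) m, ← Real.rpow_mul hdivpos.le]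
  rw [h1, term_eq ht hs hn0]

/-- tᵅᵐ = xᵐ when t = x^(1/α). -/
lemma t_pow {α x : ℝ} (hα0 : 0 < α) (hx0 : 0 < x) (m : ℕ) :
    (x^(1/α) : ℝ)^(α*(m:ℝ)) = x^m := by
  rw [← Real.rpow_natCast x m, ← Real.rpow_mul hx0.le]
  congr 1
  field_simp


end U

end MLBound

open MLBound in
/-- For `0 < α < 1` and `x ≥ 0`, the Mittag–Leffler function satisfies
`E_α(-x) ≤ 1 / (1 + x/Γ(1+α))`. -/
theorem mittagLeffler_neg_le_inv_one_add
    {α : ℝ} (hα0 : 0 < α) (hα1 : α < 1) {x : ℝ} (hx : 0 ≤ x) :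
    mittagLeffler α (-x) ≤ 1 / (1 + x / Real.Gamma (1 + α)) := by
  have hΓpos : 0 < Real.Gamma (1 + α) := Real.Gamma_pos_of_pos (by linarith)
  rcases hx.lt_or_eq with hx0 | hx0
  swap
  · -- x = 0
    have h1 : mittagLeffler α (-x) = 1 := by
      rw [← hx0, neg_zero]
      unfold mittagLeffler
      rw [tsum_eq_single 0 (fun k hk => by rw [zero_pow hk, zero_div])]
      norm_num [Real.Gamma_one]
    rw [h1, ← hx0]
    norm_num
  -- main case 0 < x
  have hden : 0 < 1 + x / Real.Gamma (1 + α) := by positivity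
  rw [le_div_iff₀ hden]
  set t : ℝ := x ^ (1/α) with hT
  have ht : 0 < t := Real.rpow_pos_of_pos hx0 _
  set M₀ : ℕ := ⌈(4*t)/α⌉₊ + 1 with hM₀
  have hM₀R : (4:ℝ)*t ≤ α*(M₀:ℝ) := by
    have h1 : (4*t)/α ≤ (M₀:ℝ) := by
      refine le_trans (Nat.le_ceil _) ?_
      exact_mod_cast Nat.le_succ _
    calc (4:ℝ)*t = α * ((4*t)/α) := by field_simp
      _ ≤ α * M₀ := mul_le_mul_of_nonneg_left h1 hα0.le
  set ρ : ℝ := (1/2:ℝ)^α with hρ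
  have hρ0 : 0 ≤ ρ := Real.rpow_nonneg (by norm_num) α
  have hρ1 : ρ < 1 := Real.rpow_lt_one (by norm_num) (by norm_num) hα0
  set g : ℕ → ℝ := fun m => (-x)^m / Real.Gamma (α*(m:ℝ)+1) with hg
  -- per-term limits
  have hlim : ∀ m : ℕ, Tendsto (fun n : ℕ => (-((t/n)^α))^m * bb (α*(m:ℝ)) n)
      atTop (𝓝 (g m)) := by
    intro m
    rcases Nat.eq_zero_or_pos m with hm | hm
    · subst hm
      have hconst : ∀ n : ℕ, (-((t/n)^α))^(0:ℕ) * bb (α*((0:ℕ):ℝ)) n = 1 := by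
        intro n
        norm_num
      have hg0 : g 0 = 1 := by simp [hg, Real.Gamma_one]
      rw [hg0]
      exact tendsto_const_nhds.congr (fun n => (hconst n).symm)
    · have h1 := term_tendsto hα0 ht m hm
      have h2 : g m = (-1:ℝ)^m * (t ^ (α*(m:ℝ)) / Real.Gamma (α*(m:ℝ)+1)) := by
        rw [hg, hT, t_pow hα0 hx0 m, neg_pow]
        ring
      rw [h2]
      refine (h1.const_mul ((-1:ℝ)^m)).congr fun n => ?_
      rw [neg_pow ((t/n)^α) m]
      ring
  -- eventual bound on term M₀
  have hCev : ∀ᶠ n : ℕ in atTop,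
      |(-((t/n)^α))^M₀ * bb (α*(M₀:ℝ)) n| ≤ |g M₀| + 1 := by
    refine ((hlim M₀).abs.eventually_lt_const ?_).mono (fun n h => h.le)
    linarith [abs_nonneg (g M₀)]
  -- domination
  have hdom : ∀ᶠ n : ℕ in atTop, ∀ k : ℕ,
      |(-((t/n)^α))^(k + M₀) * bb (α*((k + M₀ : ℕ):ℝ)) n| ≤ (|g M₀| + 1) * ρ^k := by
    filter_upwards [hCev, eventually_ge_atTop (⌈(4:ℝ)*t⌉₊ + 1)] with n hCn hn
    have hn1 : 1 ≤ n := by omega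
    have hnt : (4:ℝ)*t ≤ n := by
      refine le_trans (Nat.le_ceil _) ?_
      exact_mod_cast by omega
    have hy0 : (0:ℝ) ≤ (t/n)^α := Real.rpow_nonneg (by positivity) α
    intro k
    induction k with
    | zero => simpa using hCn
    | succ k ih =>
      have hidk : k + 1 + M₀ = (k + M₀) + 1 := by omega
      rw [hidk]
      have hm4 : (4:ℝ)*t ≤ α*((k+M₀ : ℕ):ℝ) := by
        refine le_trans hM₀R (mul_le_mul_of_nonneg_left ?_ hα0.le)
        exact_mod_cast Nat.le_add_left M₀ k
      have hβ1 : (-1:ℝ) < α*((k+M₀:ℕ):ℝ) := by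
        have : (0:ℝ) ≤ α*((k+M₀:ℕ):ℝ) := by positivity
        linarith
      have hβ2 : (-1:ℝ) < α*(((k+M₀)+1:ℕ):ℝ) := by
        have : (0:ℝ) ≤ α*(((k+M₀)+1:ℕ):ℝ) := by positivity
        linarith
      rw [abs_term hy0 hβ2]
      rw [abs_term hy0 hβ1] at ih
      have hstep := ratio_step hα0 ht hnt hn1 hm4
      calc ((t/↑n)^α)^((k+M₀)+1) * bb (α*(((k+M₀)+1:ℕ):ℝ)) n
          ≤ ρ * (((t/↑n)^α)^(k+M₀) * bb (α*((k+M₀:ℕ):ℝ)) n) := hstep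
        _ ≤ ρ * ((|g M₀| + 1) * ρ^k) := mul_le_mul_of_nonneg_left ih hρ0
        _ = (|g M₀| + 1) * ρ^(k+1) := by ring
  -- eventual summability
  have hy_ev : ∀ᶠ n : ℕ in atTop, 0 < (t/n)^α ∧ (t/n)^α < 1 := by
    filter_upwards [eventually_gt_atTop ⌈t⌉₊, eventually_ge_atTop 1] with n hn hn1
    have hnR : (0:ℝ) < n := by exact_mod_cast hn1
    have htn : t/(n:ℝ) < 1 := by
      rw [div_lt_one hnR]
      refine lt_of_le_of_lt (Nat.le_ceil t) ?_
      exact_mod_cast hn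
    constructor
    · exact Real.rpow_pos_of_pos (by positivity) α
    · exact Real.rpow_lt_one (by positivity) htn hα0
  have hsum : ∀ᶠ n : ℕ in atTop,
      Summable (fun m : ℕ => (-((t/n)^α))^m * bb (α*(m:ℝ)) n) := by
    filter_upwards [hy_ev] with n hy
    exact summable_main hα0 hα1 hy.1 hy.2 n
  -- limit of uSeq
  have hA : Tendsto (fun n : ℕ => uSeq α ((t/n)^α) n) atTop (𝓝 (∑' m, g m)) := by
    have := tendsto_tsum_aux (fun n m => (-((t/n)^α))^m * bb (α*(m:ℝ)) n) g
      (fun k => (|g M₀| + 1) * ρ^k) M₀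
      ((summable_geometric_of_lt_one hρ0 hρ1).mul_left _) hlim hdom hsum
    exact this
  -- identification of the limit
  have hB : ∑' m, g m = mittagLeffler α (-x) := by
    refine tsum_congr fun m => ?_
    show (-x)^m / Real.Gamma (α*(m:ℝ)+1) = (-x)^m / Real.Gamma ((m:ℝ)*α+1)
    rw [mul_comm]
  -- denominator limit
  have hC2 : Tendsto (fun n : ℕ => 1 + ((t/n)^α) * bb α n) atTop
      (𝓝 (1 + x / Real.Gamma (1 + α))) := by
    have h1 := term_tendsto hα0 ht 1 one_pos
    simp only [pow_one, Nat.cast_one, mul_one] at h1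
    have h2 : t^α = x := by
      rw [hT, ← Real.rpow_mul hx0.le]
      rw [one_div, inv_mul_cancel₀ hα0.ne', Real.rpow_one]
    have h3 : Real.Gamma (α+1) = Real.Gamma (1+α) := by rw [add_comm]
    rw [h2, h3] at h1
    exact tendsto_const_nhds.add h1
  -- eventual discrete inequality
  have hD : ∀ᶠ n : ℕ in atTop,
      uSeq α ((t/n)^α) n * (1 + ((t/n)^α) * bb α n) ≤ 1 := by
    filter_upwards [hy_ev] with n hy
    exact u_mul_le_one hα0 hα1 hy.1 hy.2 n
  have hmul := hA.mul hC2
  rw [hB] at hmul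
  exact le_of_tendsto hmul hD
end

section
/- For every α > 0, β > 0, and every z ∈ ℂ, the family of terms k ↦ z^k / Γ(kα + β) (k ∈ ℕ) is absolutely summable; hence the two-parameter Mittag–Leffler function E_{α,β}(z) = ∑_{k=0}^∞ z^k / Γ(kα + β) is well defined on all of ℂ (and in particular E_α(z) = E_{α,1}(z) is well defined on all of ℂ). -/
/-- Two-parameter Mittag–Leffler function on `ℂ`:
`E_{α,β}(z) = ∑_{k=0}^∞ z^k / Γ(kα + β)`. -/
noncomputable def mittagLeffler2 (α β : ℝ) (z : ℂ) : ℂ :=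
  ∑' k : ℕ, z ^ k / (Real.Gamma (k * α + β) : ℂ)

private lemma gamma_step {α β : ℝ} (hα : 0 < α) (hβ : 0 < β) {n : ℕ} (hn : 1 ≤ (n : ℝ) * α)
    {x : ℝ} (hx : 2 ≤ x) : x * Real.Gamma x ≤ Real.Gamma (x + n * α) := by
  have h1 : x * Real.Gamma x = Real.Gamma (x + 1) :=
    (Real.Gamma_add_one (by linarith)).symm
  rw [h1]
  exact Real.Gamma_strictMonoOn_Ici.monotoneOn (by simp; linarith) (by simp; linarith)
    (by linarith)

private lemma key_summable {α β : ℝ} (hα : 0 < α) (hβ : 0 < β) (z : ℂ) :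
    Summable (fun k : ℕ => ‖z‖ ^ k / Real.Gamma (k * α + β)) := by
  set n : ℕ := ⌈1 / α⌉₊ with hn_def
  have hn0 : 0 < n := Nat.ceil_pos.mpr (by positivity)
  have : NeZero n := ⟨hn0.ne'⟩
  have hnα : 1 ≤ (n : ℝ) * α := by
    have := Nat.le_ceil (1 / α)
    calc (1 : ℝ) = (1 / α) * α := by field_simp
    _ ≤ n * α := by apply mul_le_mul_of_nonneg_right this hα.le
  set M : ℝ := 2 * max 1 ‖z‖ ^ n with hM_def
  have hM1 : 2 ≤ M := by
    have : (1 : ℝ) ≤ max 1 ‖z‖ ^ n := one_le_pow₀ (le_max_left _ _)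
    nlinarith
  have hzM : ‖z‖ ^ n ≤ M / 2 := by
    have h1 : ‖z‖ ^ n ≤ max 1 ‖z‖ ^ n := pow_le_pow_left₀ (norm_nonneg z) (le_max_right _ _) n
    have h2 : M / 2 = max 1 ‖z‖ ^ n := by rw [hM_def]; ring
    linarith
  -- the function
  set b : ℕ → ℝ := fun k => ‖z‖ ^ k / Real.Gamma (k * α + β) with hb_def
  have hb_nonneg : ∀ k, 0 ≤ b k := fun k => by
    have : 0 < Real.Gamma (k * α + β) := Real.Gamma_pos_of_pos (by positivity)
    positivity
  -- reindex via division with remainder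
  suffices hg : Summable (fun p : Fin n × ℕ => b (p.2 * n + (p.1 : ℕ))) by
    exact ((Equiv.prodComm (Fin n) ℕ).trans (Nat.divModEquiv n).symm).summable_iff.mp hg
  rw [summable_prod_of_nonneg (fun p => hb_nonneg _)]
  constructor
  · -- each arithmetic subsequence is summable, by the ratio test
    intro j
    apply summable_of_ratio_norm_eventually_le (r := 1/2) (by norm_num)
    have htend : Filter.Tendsto (fun m : ℕ => ((m * n + (j : ℕ) : ℕ) : ℝ) * α + β)
        Filter.atTop Filter.atTop := by
      apply Filter.tendsto_atTop_add_const_right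
      apply Filter.Tendsto.atTop_mul_const hα
      exact tendsto_natCast_atTop_atTop.comp
        (Filter.tendsto_atTop_mono (fun m => Nat.le_add_right _ _ |>.trans
          (Nat.add_le_add_right (Nat.le_mul_of_pos_right m hn0) _)) Filter.tendsto_id)
    filter_upwards [htend.eventually_ge_atTop (max 2 M)] with m hm
    set x : ℝ := ((m * n + (j : ℕ) : ℕ) : ℝ) * α + β with hx_def
    have hx2 : 2 ≤ x := le_trans (le_max_left _ _) hm
    have hxM : M ≤ x := le_trans (le_max_right _ _) hm
    have hΓpos : 0 < Real.Gamma x := Real.Gamma_pos_of_pos (by linarith)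
    have hstep : x * Real.Gamma x ≤ Real.Gamma (x + n * α) := gamma_step hα hβ hnα hx2
    have hx1 : (((m + 1) * n + (j : ℕ) : ℕ) : ℝ) * α + β = x + n * α := by
      push_cast [hx_def]; ring
    have hΓ'pos : 0 < Real.Gamma (x + n * α) := Real.Gamma_pos_of_pos (by nlinarith)
    rw [Real.norm_eq_abs, Real.norm_eq_abs, abs_of_nonneg (hb_nonneg _),
      abs_of_nonneg (hb_nonneg _)]
    simp only [hb_def, hx1, ← hx_def]
    have hpow : ‖z‖ ^ ((m + 1) * n + (j : ℕ)) = ‖z‖ ^ n * ‖z‖ ^ (m * n + (j : ℕ)) := by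
      rw [← pow_add]; ring_nf
    rw [hpow]
    have hMx : M * Real.Gamma x ≤ Real.Gamma (x + n * α) := by nlinarith
    rw [div_le_iff₀ hΓ'pos]
    have h2 : 1 / 2 * (‖z‖ ^ (m * n + (j : ℕ)) / Real.Gamma x) * Real.Gamma (x + n * α)
        ≥ 1 / 2 * (‖z‖ ^ (m * n + (j : ℕ)) / Real.Gamma x) * (M * Real.Gamma x) := by
      apply mul_le_mul_of_nonneg_left hMx
      positivity
    have h3 : 1 / 2 * (‖z‖ ^ (m * n + (j : ℕ)) / Real.Gamma x) * (M * Real.Gamma x)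
        = (M / 2) * ‖z‖ ^ (m * n + (j : ℕ)) := by
      field_simp
    have h4 : ‖z‖ ^ n * ‖z‖ ^ (m * n + (j : ℕ)) ≤ (M / 2) * ‖z‖ ^ (m * n + (j : ℕ)) :=
      mul_le_mul_of_nonneg_right hzM (by positivity)
    linarith
  · -- finitely many residues
    exact Summable.of_finite

/-- For every `α > 0`, `β > 0` and `z ∈ ℂ`, the terms `k ↦ z^k / Γ(kα + β)` are absolutely
summable; hence the two-parameter Mittag–Leffler function `E_{α,β}` is well defined on all
of `ℂ` (its defining series converges), and in particular so is `E_α = E_{α,1}`. -/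
theorem mittagLeffler2_summable
    {α β : ℝ} (hα : 0 < α) (hβ : 0 < β) (z : ℂ) :
    Summable (fun k : ℕ => ‖z ^ k / (Real.Gamma (k * α + β) : ℂ)‖) ∧
    Summable (fun k : ℕ => z ^ k / (Real.Gamma (k * α + β) : ℂ)) ∧
    HasSum (fun k : ℕ => z ^ k / (Real.Gamma (k * α + β) : ℂ)) (mittagLeffler2 α β z) := by
  have h1 : Summable (fun k : ℕ => ‖z ^ k / (Real.Gamma (k * α + β) : ℂ)‖) := by
    have := key_summable hα hβ z
    apply this.congr
    intro k
    have hΓ : 0 < Real.Gamma (k * α + β) := Real.Gamma_pos_of_pos (by positivity)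
    rw [norm_div, norm_pow, Complex.norm_real, Real.norm_eq_abs, abs_of_pos hΓ]
  exact ⟨h1, h1.of_norm, (h1.of_norm).hasSum⟩
end
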